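/- arXiv:1305.4607 — 2 statements merged into one kernel-verified Lean document; each statement's English description precedes it below -/
import Mathlib

section
/- Let I be a small directed (cofiltered) category. Then there exists a small cofinite directed partially ordered set A of infinite height and a cofinal functor p: A → I. -/
/-!
By Deligne's lemma (`IsFiltered.exists_directed`, applied to `Iᵒᵖ`) some directed poset `B` maps
cofinally to `I`, so it suffices to map a cofinite directed poset of infinite height monotonically
and cofinally into `B`. The finite subsets of `B × ℕ` form such a poset (the factor `ℕ` makes
it of infinite height even when `B` is finite). Being cofinite, it carries a monotone map to `B`
defined by well-founded recursion: send `s` to a common upper bound of its values at the finitely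
many proper subsets of `s` and of the first coordinates of the elements of `s`.
-/

open CategoryTheory

namespace ProPaper

structure CofDirPoset where
  carrier : Type
  [po : PartialOrder carrier]
  [dir : IsDirected carrier (· ≤ ·)]
  [ne : Nonempty carrier]
  cofinite : ∀ t : carrier, {s : carrier | s ≤ t}.Finite

attribute [instance] CofDirPoset.po CofDirPoset.dir CofDirPoset.ne

end ProPaper

theorem LocallyFiniteOrderBot.wellFoundedLT (α : Type*) [Preorder α]
    [LocallyFiniteOrderBot α] : WellFoundedLT α :=
  StrictMono.wellFoundedLT (f := fun a : α => (Finset.Iic a).card) fun _ _ h =>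
    Finset.card_lt_card (Finset.Iic_ssubset_Iic.2 h)

theorem exists_monotone_forall_le {α β : Type*} [PartialOrder α] [LocallyFiniteOrderBot α]
    [Preorder β] [IsDirectedOrder β] [Nonempty β] (g : α → β) :
    ∃ f : α → β, Monotone f ∧ ∀ a, g a ≤ f a := by
  classical
  have := LocallyFiniteOrderBot.wellFoundedLT α
  let bound (a : α) (rec : ∀ c < a, β) : Finset β :=
    insert (g a) ((Finset.Iio a).attach.image fun c => rec c.1 (Finset.mem_Iio.1 c.2))
  let f : α → β := wellFounded_lt.fix fun a rec => (bound a rec).exists_le.choose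
  have hf (a : α) : ∀ b ∈ bound a (fun c _ => f c), b ≤ f a := by
    rw [show f a = _ from wellFounded_lt.fix_eq _ a]
    exact (bound a fun c _ => f c).exists_le.choose_spec
  refine ⟨f, fun a a' hle => ?_, fun a => hf a _ (Finset.mem_insert_self _ _)⟩
  obtain rfl | hlt := eq_or_lt_of_le hle
  · rfl
  · exact hf a' _ (Finset.mem_insert_of_mem
      (Finset.mem_image.2 ⟨⟨a, Finset.mem_Iio.2 hlt⟩, Finset.mem_attach _ _, rfl⟩))

theorem Monotone.final_functor {α β : Type*} [Preorder α] [IsDirectedOrder α] [Preorder β]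
    {f : α → β} (hf : Monotone f) (hcof : ∀ b, ∃ a, b ≤ f a) : hf.functor.Final :=
  Functor.final_of_exists_of_isFiltered _ (fun b => (hcof b).imp fun _ h => ⟨homOfLE h⟩)
    fun {_ c} _ _ => ⟨c, 𝟙 c, Subsingleton.elim _ _⟩

namespace ProPaper

/-- The paper's poset `A`, with a morphism `u → v` iff `u ≥ v`, is the category `Aᵒᵖ` here, and
its cofinal functors are the initial ones. -/
theorem exists_cofinite_directed_initial (I : Type) [SmallCategory I] [IsCofiltered I] :
    ∃ A : CofDirPoset, (∀ a : A.carrier, ∃ b : A.carrier, a < b) ∧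
      ∃ p : A.carrierᵒᵖ ⥤ I, p.Initial := by
  classical
  obtain ⟨B, _, _, _, F, _⟩ := IsFiltered.exists_directed Iᵒᵖ
  obtain ⟨f, hf, hle⟩ :=
    exists_monotone_forall_le fun s : Finset (B × ℕ) => (s.image Prod.fst).exists_le.choose
  have hcof (b : B) : b ≤ f {(b, 0)} :=
    ((Finset.exists_le _).choose_spec b (by simp)).trans (hle {(b, 0)})
  have := hf.final_functor fun b => ⟨_, hcof b⟩
  refine ⟨⟨Finset (B × ℕ), Set.finite_Iic⟩, fun s => ?_, (hf.functor ⋙ F).leftOp, inferInstance⟩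
  obtain ⟨x, hx⟩ := Infinite.exists_notMem_finset s
  exact ⟨insert x s, Finset.ssubset_insert hx⟩

end ProPaper
end

section
/- Let D be a category and A, B classes of morphisms in D that are invariant under isomorphisms in the arrow category. If there exists a weak functorial factorization in D into a morphism in A followed by a morphism in B, then there exists a functorial factorization in D into a morphism in A followed by a morphism in B. -/
/-!
For `f : X ⟶ Y` with weak factorization `X' → L → Y'`, the isomorphism
`S ⋙ compFunctor D ≅ 𝟭` supplies isomorphisms `X ≅ X'` and `Y' ≅ Y`; composing with them gives a
factorization `X → L → Y` of `f` on the nose that is isomorphic over `Δ²` to the original one.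
Its two maps are thus isomorphic arrows to the original ones, hence still in `A` and `B`, and
conjugating `S` by these isomorphisms keeps it a functor.
-/

open CategoryTheory CategoryTheory.Limits Opposite

universe v u

namespace ProPaper

section FuncFact

variable (D : Type*) [Category D]

/-- The monotone inclusion `Δ¹ ≅ Δ^{0,2} ↪ Δ²`, with `Δⁿ` modeled as `Fin (n+1)`. -/
def d02 : Fin 2 ⥤ Fin 3 :=
  Monotone.functor (f := fun i => (⟨2 * i.1, by omega⟩ : Fin 3))
    (fun a b h => by
      simp only [Fin.le_def] at h ⊢
      omega)

/-- The composition functor `D^{Δ²} ⥤ D^{Δ¹}`, i.e. restriction along `Δ¹ ↪ Δ²`. -/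
def compFunctor : (Fin 3 ⥤ D) ⥤ (Fin 2 ⥤ D) :=
  (Functor.whiskeringLeft (Fin 2) (Fin 3) D).obj d02

/-- The morphism `0 ⟶ 1` of `Δ²`. -/
def hom01 : (0 : Fin 3) ⟶ 1 := homOfLE (by decide)

/-- The morphism `1 ⟶ 2` of `Δ²`. -/
def hom12 : (1 : Fin 3) ⟶ 2 := homOfLE (by decide)

/-- `Mor(D) =^{func} B ∘ A`: there is a functorial factorization in `D` (a section of the
composition functor `D^{Δ²} ⥤ D^{Δ¹}`) into a morphism in `A` followed by a morphism in `B`. -/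
def FuncFact (A B : MorphismProperty D) : Prop :=
  ∃ S : (Fin 2 ⥤ D) ⥤ (Fin 3 ⥤ D), S ⋙ compFunctor D = 𝟭 (Fin 2 ⥤ D) ∧
    ∀ f : Fin 2 ⥤ D, A ((S.obj f).map hom01) ∧ B ((S.obj f).map hom12)

end FuncFact

section Lift

variable {D : Type*} [Category D]

def replaceEnds (F : ComposableArrows D 2) {X₀ X₂ : D} (e₀ : F.obj 0 ≅ X₀) (e₂ : F.obj 2 ≅ X₂) :
    ComposableArrows D 2 :=
  .mk₂ (e₀.inv ≫ F.map' 0 1) (F.map' 1 2 ≫ e₂.hom)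

def isoReplaceEnds (F : ComposableArrows D 2) {X₀ X₂ : D} (e₀ : F.obj 0 ≅ X₀) (e₂ : F.obj 2 ≅ X₂) :
    F ≅ replaceEnds F e₀ e₂ :=
  ComposableArrows.isoMk₂ e₀ (Iso.refl _) e₂
    (show F.map' 0 1 ≫ 𝟙 _ = e₀.hom ≫ e₀.inv ≫ F.map' 0 1 by
      rw [Category.comp_id, Iso.hom_inv_id_assoc])
    (show F.map' 1 2 ≫ e₂.hom = 𝟙 _ ≫ F.map' 1 2 ≫ e₂.hom by rw [Category.id_comp])

lemma compFunctor_obj_hom (F : ComposableArrows D 2) :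
    ComposableArrows.hom ((compFunctor D).obj F) = F.map' 0 1 ≫ F.map' 1 2 := by
  rw [← F.map_comp]
  rfl

lemma compFunctor_obj_replaceEnds (F : ComposableArrows D 2) (G : ComposableArrows D 1)
    (e₀ : F.obj 0 ≅ G.left) (e₂ : F.obj 2 ≅ G.right)
    (w : ComposableArrows.hom ((compFunctor D).obj F) ≫ e₂.hom = e₀.hom ≫ G.hom) :
    (compFunctor D).obj (replaceEnds F e₀ e₂) = G := by
  rw [compFunctor_obj_hom] at w
  refine ComposableArrows.ext₁ rfl rfl ?_
  change (e₀.inv ≫ F.map' 0 1) ≫ F.map' 1 2 ≫ e₂.hom = eqToHom rfl ≫ G.hom ≫ eqToHom rfl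
  rw [eqToHom_refl, eqToHom_refl, Category.id_comp, Category.comp_id, Category.assoc,
    Iso.inv_comp_eq, ← w]
  exact (Category.assoc _ _ _).symm

variable {C : Type*} [Category C] (S : C ⥤ ComposableArrows D 2) (G : C ⥤ ComposableArrows D 1)

def liftOfIsoCompFunctor (φ : S ⋙ compFunctor D ≅ G) : C ⥤ ComposableArrows D 2 :=
  S.copyObj (fun c => replaceEnds (S.obj c) ((φ.app c).app 0) ((φ.app c).app 1))
    (fun c => isoReplaceEnds (S.obj c) _ _)

lemma liftOfIsoCompFunctor_comp_compFunctor (φ : S ⋙ compFunctor D ≅ G) :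
    liftOfIsoCompFunctor S G φ ⋙ compFunctor D = G := by
  refine Functor.ext_of_iso
    (Functor.isoWhiskerRight (S.isoCopyObj _ _).symm (compFunctor D) ≪≫ φ)
    (fun c => compFunctor_obj_replaceEnds _ _ _ _ ?_) (fun c => ?_)
  · exact (φ.hom.app c).naturality _
  · refine NatTrans.ext (funext fun i => ?_)
    refine Eq.trans ?_ (eqToHom_app _ i).symm
    fin_cases i
    exacts [((φ.app c).app 0).inv_hom_id, ((φ.app c).app 1).inv_hom_id]

/-- The composition functor is an isofibration, uniformly in a parameter category `C`. -/
theorem exists_lift_eq_of_iso_comp_compFunctor (φ : S ⋙ compFunctor D ≅ G) :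
    ∃ S' : C ⥤ ComposableArrows D 2, S' ⋙ compFunctor D = G ∧ Nonempty (S ≅ S') :=
  ⟨liftOfIsoCompFunctor S G φ, liftOfIsoCompFunctor_comp_compFunctor S G φ, ⟨S.isoCopyObj _ _⟩⟩

end Lift

/-- Corollary 5.7 of the paper: if `A` and `B` are classes of morphisms invariant under
isomorphism in the arrow category, and there exists a weak functorial factorization in `D`
into a morphism in `A` followed by a morphism in `B`, then there exists a (genuine)
functorial factorization in `D` into a morphism in `A` followed by a morphism in `B`. -/
theorem funcFact_of_weak_funcFact
    (D : Type*) [Category D] (A B : MorphismProperty D)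
    (hA : ∀ ⦃X Y X' Y' : D⦄ (f : X ⟶ Y) (g : X' ⟶ Y'),
      (Arrow.mk f ≅ Arrow.mk g) → A f → A g)
    (hB : ∀ ⦃X Y X' Y' : D⦄ (f : X ⟶ Y) (g : X' ⟶ Y'),
      (Arrow.mk f ≅ Arrow.mk g) → B f → B g)
    (S : (Fin 2 ⥤ D) ⥤ (Fin 3 ⥤ D))
    (hS : Nonempty (S ⋙ compFunctor D ≅ 𝟭 (Fin 2 ⥤ D)))
    (hAB : ∀ f : Fin 2 ⥤ D, A ((S.obj f).map hom01) ∧ B ((S.obj f).map hom12)) :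
    FuncFact D A B := by
  obtain ⟨φ⟩ := hS
  obtain ⟨S', hS', ⟨e⟩⟩ := exists_lift_eq_of_iso_comp_compFunctor S (𝟭 _) φ
  exact ⟨S', hS', fun f =>
    ⟨hA _ _ (Arrow.isoOfNatIso (e.app f) (Arrow.mk hom01)) (hAB f).1,
      hB _ _ (Arrow.isoOfNatIso (e.app f) (Arrow.mk hom12)) (hAB f).2⟩⟩

end ProPaper
end
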